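/- arXiv:2504.19008 — 2 statements merged into one kernel-verified Lean document; each statement's English description precedes it below -/
import Mathlib

section
/- For the n-fold product of the unit interval with weight 1 in each coordinate, the generating function identity Σ_{i≥0} ([i+1]_q)^n t^i = (Σ_{σ ∈ S_n} t^{des(σ)} q^{maj(σ)}) / Π_{j=0}^{n} (1 − t q^j) holds (Carlitz's identity), where des(σ) is the number of descents and maj(σ) the major index of σ. -/
/-!
Expand `([i+1]_q)^n = ∑ q^{∑ f}` over `f : Fin n → {0, …, i}` and group the `f` by the
permutation `σ` that sorts them decreasingly, ties broken increasingly (`Tuple.sort` on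
`ℕᵒᵈ`). These `f` are the ones compatible with `σ`: `f ∘ σ` is weakly decreasing and
strictly decreasing at each descent of `σ`. Subtracting from `(f ∘ σ) p` the number of
descents at positions `≥ p` leaves a partition with at most `n` parts, each at most
`i - des σ`, and lowers the weight by `maj σ`; recording the partition by the differences of
consecutive parts turns it into a composition `d` of `i - des σ` into `n + 1` parts of weight
`∑ j * d j`. Such compositions enumerate the coefficient of `t^(i - des σ)` in
`∏_{j=0}^n (1 - t q^j)⁻¹`.
-/

/-- The number of descents of a permutation of `{0,…,n-1}` in one-line notation. -/
def desStat {n : ℕ} (σ : Equiv.Perm (Fin n)) : ℕ :=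
  ∑ i : Fin n, if h : (i : ℕ) + 1 < n then (if σ ⟨(i : ℕ) + 1, h⟩ < σ i then 1 else 0) else 0

/-- The major index of a permutation: the sum of the (1-indexed) descent positions. -/
def majStat {n : ℕ} (σ : Equiv.Perm (Fin n)) : ℕ :=
  ∑ i : Fin n,
    if h : (i : ℕ) + 1 < n then (if σ ⟨(i : ℕ) + 1, h⟩ < σ i then (i : ℕ) + 1 else 0) else 0

open PowerSeries Finset OrderDual

lemma strictMono_fin_iff_lt_succ {n : ℕ} {α : Type*} [Preorder α] {g : Fin n → α} :
    StrictMono g ↔ ∀ p (h : p + 1 < n), g ⟨p, by omega⟩ < g ⟨p + 1, h⟩ := by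
  cases n with
  | zero => exact ⟨fun _ p h => absurd h (by omega), fun _ a => a.elim0⟩
  | succ n =>
    rw [Fin.strictMono_iff_lt_succ]
    exact ⟨fun hg p hp => hg ⟨p, by omega⟩, fun hg i => hg i (by omega)⟩

section TailSum

def tailSum (N : ℕ) (c : ℕ → ℕ) (k : ℕ) : ℕ := ∑ j ∈ Ico k N, c j

variable {N : ℕ} {c : ℕ → ℕ}

lemma tailSum_zero : tailSum N c 0 = ∑ j ∈ range N, c j := by
  rw [tailSum, range_eq_Ico]

lemma tailSum_of_le {k : ℕ} (h : N ≤ k) : tailSum N c k = 0 := by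
  simp [tailSum, h]

lemma tailSum_eq_add {k : ℕ} (h : k < N) : tailSum N c k = c k + tailSum N c (k + 1) :=
  sum_eq_sum_Ico_succ_bot h c

lemma antitone_tailSum : Antitone (tailSum N c) :=
  fun _ _ hab => sum_le_sum_of_subset (Ico_subset_Ico_left hab)

lemma tailSum_succ_succ (k : ℕ) : tailSum (N + 1) c (k + 1) = tailSum N (fun j => c (j + 1)) k :=
  (sum_Ico_add' c k N 1).symm

lemma sum_range_tailSum : ∑ p ∈ range N, tailSum N c p = ∑ r ∈ range N, (r + 1) * c r := by
  induction N with
  | zero => simp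
  | succ N ih =>
    have htop : ∀ p ∈ range (N + 1), tailSum (N + 1) c p = tailSum N c p + c N := fun p hp =>
      sum_Ico_succ_top (Nat.lt_succ_iff.mp (mem_range.mp hp)) c
    rw [sum_congr rfl htop, sum_add_distrib, sum_range_succ (tailSum N c), ih,
      tailSum_of_le le_rfl, sum_const, card_range, sum_range_succ (fun r => (r + 1) * c r)]
    ring

lemma sum_range_tailSum_succ :
    ∑ p ∈ range N, tailSum (N + 1) c (p + 1) = ∑ r ∈ range (N + 1), r * c r := by
  simp_rw [tailSum_succ_succ, sum_range_tailSum, sum_range_succ' (fun r => r * c r)]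
  simp

lemma eq_of_tailSum_eq {c' : ℕ → ℕ} (h : ∀ k, tailSum N c k = tailSum N c' k) {j : ℕ}
    (hj : j < N) : c j = c' j := by
  have := h j
  rw [tailSum_eq_add hj, tailSum_eq_add hj, h (j + 1)] at this
  omega

lemma exists_finsupp_tailSum_eq {Λ : ℕ → ℕ} (hΛ : Antitone Λ) (hN : Λ N = 0) :
    ∃ d : ℕ →₀ ℕ, d.support ⊆ range N ∧ ∀ k, tailSum N d k = Λ k := by
  have hsupp : ∀ j, Λ j - Λ (j + 1) ≠ 0 → j ∈ range N := fun j hj => by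
    by_contra hjN
    have := hΛ (show N ≤ j by simpa using hjN)
    omega
  refine ⟨Finsupp.onFinset _ _ hsupp, Finsupp.support_onFinset_subset, fun k => ?_⟩
  induction h : N - k generalizing k with
  | zero =>
    rw [tailSum_of_le (by omega)]
    have := hΛ (show N ≤ k by omega)
    omega
  | succ m ih =>
    rw [tailSum_eq_add (by omega), ih (k + 1) (by omega), Finsupp.onFinset_apply]
    have := hΛ (show k ≤ k + 1 by omega)
    omega

end TailSum

section Descents

variable {n : ℕ}

def descentIndicator (σ : Equiv.Perm (Fin n)) (p : ℕ) : ℕ :=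
  if h : p + 1 < n then (if σ ⟨p + 1, h⟩ < σ ⟨p, by omega⟩ then 1 else 0) else 0

variable (σ : Equiv.Perm (Fin n))

lemma descentIndicator_of_le {p : ℕ} (h : n ≤ p + 1) : descentIndicator σ p = 0 := by
  simp [descentIndicator, show ¬ p + 1 < n by omega]

lemma desStat_eq_sum : desStat σ = ∑ p ∈ range n, descentIndicator σ p :=
  Fin.sum_univ_eq_sum_range (descentIndicator σ) n

lemma majStat_eq_sum : majStat σ = ∑ p ∈ range n, (p + 1) * descentIndicator σ p := by
  rw [majStat, ← Fin.sum_univ_eq_sum_range (fun p => (p + 1) * descentIndicator σ p) n]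
  refine sum_congr rfl fun p _ => ?_
  simp only [descentIndicator]
  split_ifs <;> simp_all

lemma tailSum_descentIndicator_eq_add (p : ℕ) :
    tailSum n (descentIndicator σ) p =
      descentIndicator σ p + tailSum n (descentIndicator σ) (p + 1) := by
  rcases lt_or_ge p n with h | h
  · exact tailSum_eq_add h
  · rw [tailSum_of_le h, tailSum_of_le (by omega), descentIndicator_of_le σ (by omega)]

lemma tailSum_descentIndicator_zero : tailSum n (descentIndicator σ) 0 = desStat σ := by
  rw [desStat_eq_sum, tailSum_zero]

lemma sum_range_tailSum_descentIndicator :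
    ∑ p ∈ range n, tailSum n (descentIndicator σ) p = majStat σ := by
  rw [sum_range_tailSum, majStat_eq_sum]

end Descents

section Compatible

variable {n : ℕ} (σ : Equiv.Perm (Fin n))

def paddedComp (f : Fin n → ℕ) (p : ℕ) : ℕ := if h : p < n then f (σ ⟨p, h⟩) else 0

def IsCompatible (f : Fin n → ℕ) : Prop :=
  ∀ p, paddedComp σ f (p + 1) + descentIndicator σ p ≤ paddedComp σ f p

variable {σ} {f : Fin n → ℕ}

lemma paddedComp_of_le {p : ℕ} (h : n ≤ p) : paddedComp σ f p = 0 := dif_neg (by omega)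

lemma paddedComp_symm_apply (x : Fin n) : paddedComp σ f (σ.symm x) = f x := by
  simp [paddedComp]

lemma paddedComp_le {i : ℕ} (h : ∀ x, f x ≤ i) (p : ℕ) : paddedComp σ f p ≤ i := by
  unfold paddedComp
  split
  · exact h _
  · exact Nat.zero_le i

lemma sum_range_paddedComp : ∑ p ∈ range n, paddedComp σ f p = ∑ x, f x := by
  rw [← Fin.sum_univ_eq_sum_range, ← Equiv.sum_comp σ f]
  simp [paddedComp]

lemma eq_sort_toDual_iff : σ = Tuple.sort (toDual ∘ f) ↔ IsCompatible σ f := by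
  rw [Tuple.eq_sort_iff', strictMono_fin_iff_lt_succ]
  refine forall_congr' fun p => ?_
  by_cases h : p + 1 < n
  · have hne : σ ⟨p + 1, h⟩ ≠ σ ⟨p, by omega⟩ := σ.injective.ne (by simp)
    simp only [h, forall_true_left, paddedComp, descentIndicator, dif_pos, show p < n by omega]
    change toLex (toDual (f (σ _)), σ _) < toLex (toDual (f (σ _)), σ _) ↔ _
    rw [Prod.Lex.toLex_lt_toLex]
    simp only [toDual_lt_toDual, toDual_inj]
    split_ifs with hd
    · have := hd.not_gt
      omega
    · have := lt_of_le_of_ne (not_lt.mp hd) hne.symm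
      omega
  · have hp : n ≤ p + 1 := by omega
    simp [h, descentIndicator_of_le σ hp, paddedComp_of_le hp]

instance : DecidablePred (IsCompatible σ) := fun _ => decidable_of_iff _ eq_sort_toDual_iff

lemma IsCompatible.tailSum_descentIndicator_le (hf : IsCompatible σ f) (p : ℕ) :
    tailSum n (descentIndicator σ) p ≤ paddedComp σ f p := by
  induction h : n - p generalizing p with
  | zero => rw [tailSum_of_le (by omega)]; exact Nat.zero_le _
  | succ m ih =>
    have := ih (p + 1) (by omega)
    have := hf p
    rw [tailSum_descentIndicator_eq_add]
    omega

lemma IsCompatible.desStat_le (hf : IsCompatible σ f) {i : ℕ} (hi : ∀ x, f x ≤ i) :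
    desStat σ ≤ i :=
  tailSum_descentIndicator_zero σ ▸ (hf.tailSum_descentIndicator_le 0).trans (paddedComp_le hi 0)

variable (σ) in
def liftComposition (d : ℕ → ℕ) (x : Fin n) : ℕ :=
  tailSum (n + 1) d (σ.symm x + 1) + tailSum n (descentIndicator σ) (σ.symm x)

variable {d : ℕ → ℕ}

lemma paddedComp_liftComposition (p : ℕ) :
    paddedComp σ (liftComposition σ d) p =
      tailSum (n + 1) d (p + 1) + tailSum n (descentIndicator σ) p := by
  unfold paddedComp
  split_ifs with h
  · simp [liftComposition]
  · rw [tailSum_of_le (by omega), tailSum_of_le (by omega)]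

lemma isCompatible_liftComposition : IsCompatible σ (liftComposition σ d) := by
  intro p
  rw [paddedComp_liftComposition, paddedComp_liftComposition,
    tailSum_descentIndicator_eq_add σ p]
  have : tailSum (n + 1) d (p + 1 + 1) ≤ tailSum (n + 1) d (p + 1) := antitone_tailSum (by omega)
  omega

lemma liftComposition_le (x : Fin n) :
    liftComposition σ d x ≤ tailSum (n + 1) d 0 + desStat σ := by
  rw [← tailSum_descentIndicator_zero]
  exact add_le_add (antitone_tailSum (Nat.zero_le _)) (antitone_tailSum (Nat.zero_le _))

lemma sum_liftComposition :
    ∑ x, liftComposition σ d x = majStat σ + ∑ j ∈ range (n + 1), j * d j := by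
  rw [← sum_range_paddedComp (σ := σ), sum_congr rfl fun p _ => paddedComp_liftComposition p,
    sum_add_distrib, sum_range_tailSum_succ, sum_range_tailSum_descentIndicator, add_comm]

lemma IsCompatible.exists_liftComposition_eq (hf : IsCompatible σ f) {i : ℕ}
    (hi : ∀ x, f x ≤ i) :
    ∃ d ∈ finsuppAntidiag (range (n + 1)) (i - desStat σ), liftComposition σ d = f := by
  let Λ : ℕ → ℕ
    | 0 => i - desStat σ
    | p + 1 => paddedComp σ f p - tailSum n (descentIndicator σ) p
  have hΛ : Antitone Λ := antitone_nat_of_succ_le fun k => by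
    rcases k with _ | p
    · show paddedComp σ f 0 - tailSum n (descentIndicator σ) 0 ≤ i - desStat σ
      rw [tailSum_descentIndicator_zero]
      exact Nat.sub_le_sub_right (paddedComp_le hi 0) _
    · have := hf p
      have := hf.tailSum_descentIndicator_le (p + 1)
      have := tailSum_descentIndicator_eq_add σ p
      dsimp only [Λ]
      omega
  obtain ⟨d, hd, hdΛ⟩ := exists_finsupp_tailSum_eq (N := n + 1) hΛ
    (by simp only [Λ, paddedComp_of_le (le_refl n), Nat.zero_sub])
  refine ⟨d, mem_finsuppAntidiag.mpr ⟨by rw [← tailSum_zero, hdΛ], hd⟩, funext fun x => ?_⟩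
  have := hf.tailSum_descentIndicator_le (σ.symm x)
  rw [liftComposition, hdΛ, ← paddedComp_symm_apply (σ := σ) (f := f) x]
  exact Nat.sub_add_cancel this

variable (σ) in
lemma sum_finsuppAntidiag_eq_sum_isCompatible {M : Type*} [AddCommMonoid M] {i : ℕ}
    (hi : desStat σ ≤ i) (w : ℕ → M) :
    ∑ d ∈ finsuppAntidiag (range (n + 1)) (i - desStat σ),
        w (majStat σ + ∑ j ∈ range (n + 1), j * d j) =
      ∑ f ∈ Fintype.piFinset (fun _ : Fin n => range (i + 1)) with IsCompatible σ f,
        w (∑ x, f x) := by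
  refine sum_bij (fun d _ => liftComposition σ d) (fun d hd => ?_)
    (fun d₁ hd₁ d₂ hd₂ h => ?_) (fun f hf => ?_) (fun d _ => by rw [sum_liftComposition])
  · rw [mem_finsuppAntidiag] at hd
    simp only [mem_filter, Fintype.mem_piFinset, mem_range]
    refine ⟨fun x => ?_, isCompatible_liftComposition⟩
    have := liftComposition_le (σ := σ) (d := d) x
    rw [tailSum_zero, hd.1] at this
    omega
  · rw [mem_finsuppAntidiag] at hd₁ hd₂
    have htail : ∀ k, tailSum (n + 1) d₁ k = tailSum (n + 1) d₂ k := by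
      rintro (_ | p)
      · rw [tailSum_zero, tailSum_zero, hd₁.1, hd₂.1]
      · have := congrArg (paddedComp σ · p) h
        simp only [paddedComp_liftComposition] at this
        omega
    ext j
    by_cases hj : j < n + 1
    · exact eq_of_tailSum_eq htail hj
    · have hj' : j ∉ range (n + 1) := by simpa using hj
      rw [Finsupp.notMem_support_iff.mp fun h => hj' (hd₁.2 h),
        Finsupp.notMem_support_iff.mp fun h => hj' (hd₂.2 h)]
  · simp only [mem_filter, Fintype.mem_piFinset, mem_range] at hf
    obtain ⟨d, hd, rfl⟩ := hf.2.exists_liftComposition_eq fun x => Nat.lt_succ_iff.mp (hf.1 x)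
    exact ⟨d, hd, rfl⟩

end Compatible

section PowerSeries

variable {R : Type*} [CommSemiring R]

lemma sum_pow_pow_eq_sum_piFinset (x : R) (s : Finset ℕ) (n : ℕ) :
    (∑ j ∈ s, x ^ j) ^ n = ∑ f ∈ Fintype.piFinset (fun _ : Fin n => s), x ^ (∑ k, f k) := by
  rw [← Fin.prod_const, prod_univ_sum]
  exact sum_congr rfl fun f _ => prod_pow_eq_pow_sum univ f x

lemma coeff_prod_mk_pow_pow (x : R) (N m : ℕ) :
    coeff m (∏ j ∈ range N, PowerSeries.mk ((x ^ j) ^ ·)) =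
      ∑ d ∈ finsuppAntidiag (range N) m, x ^ (∑ j ∈ range N, j * d j) := by
  rw [coeff_prod]
  simp [← pow_mul, prod_pow_eq_pow_sum]

theorem mk_sum_pow_pow_eq (x : R) (n : ℕ) :
    PowerSeries.mk (fun i => (∑ j ∈ range (i + 1), x ^ j) ^ n) =
      (∑ σ : Equiv.Perm (Fin n), C (x ^ majStat σ) * X ^ desStat σ) *
        ∏ j ∈ range (n + 1), PowerSeries.mk ((x ^ j) ^ ·) := by
  ext i
  rw [coeff_mk, sum_pow_pow_eq_sum_piFinset,
    ← sum_fiberwise _ (fun f => Tuple.sort (toDual ∘ f)), sum_mul, map_sum]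
  refine sum_congr rfl fun σ _ => ?_
  rw [filter_congr fun f _ => eq_comm.trans eq_sort_toDual_iff, mul_assoc, coeff_C_mul,
    coeff_X_pow_mul', coeff_prod_mk_pow_pow]
  split_ifs with h
  · rw [← sum_finsuppAntidiag_eq_sum_isCompatible σ h, mul_sum]
    simp [pow_add]
  · rw [mul_zero]
    refine sum_eq_zero fun f hf => absurd ?_ h
    simp only [mem_filter, Fintype.mem_piFinset, mem_range] at hf
    exact hf.2.desStat_le fun x => Nat.lt_succ_iff.mp (hf.1 x)

end PowerSeries

lemma one_sub_C_mul_X_mul_mk_pow {R : Type*} [CommRing R] (r : R) :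
    (1 - C r * X) * PowerSeries.mk (r ^ ·) = 1 := by
  have h := congrArg (rescale r) (mk_one_mul_one_sub_eq_one R)
  rw [map_mul, map_sub, map_one, rescale_X, rescale_mk, mul_comm] at h
  simpa using h

theorem carlitz_identity {R : Type*} [CommRing R] (x : R) (n : ℕ) :
    (∏ j ∈ range (n + 1), (1 - C (x ^ j) * X)) *
        PowerSeries.mk (fun i => (∑ j ∈ range (i + 1), x ^ j) ^ n) =
      ∑ σ : Equiv.Perm (Fin n), C (x ^ majStat σ) * X ^ desStat σ := by
  rw [mk_sum_pow_pow_eq, mul_left_comm, ← prod_mul_distrib,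
    prod_congr rfl fun j _ => one_sub_C_mul_X_mul_mk_pow (x ^ j), prod_const_one, mul_one]

/-- **Carlitz's identity.**
`∑_{i ≥ 0} ([i+1]_q)^n t^i = (∑_{σ ∈ S_n} t^{des σ} q^{maj σ}) / ∏_{j=0}^n (1 - t q^j)`,
an identity of formal power series in `t` with coefficients in `ℚ[q]`, stated with the
denominator cleared. -/
theorem stmt_8 (n : ℕ) :
    (∏ j ∈ Finset.range (n + 1),
        (1 - PowerSeries.C ((Polynomial.X : Polynomial ℚ) ^ j) *
          PowerSeries.X)) *
      PowerSeries.mk (fun i => (∑ j ∈ Finset.range (i + 1), (Polynomial.X : Polynomial ℚ) ^ j) ^ n)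
      = ∑ σ : Equiv.Perm (Fin n),
          PowerSeries.C ((Polynomial.X : Polynomial ℚ) ^ majStat σ) *
            PowerSeries.X ^ desStat σ :=
  carlitz_identity Polynomial.X n
end

section
/- Let m be a positive integer and fix the cycle type partition λ of n. The expected number of fixed points statistic satisfies: (1/n!) Σ_{σ ∈ S_n} fxd(σ)^m = B(m) for all n ≥ m, where fxd(σ) is the number of fixed points of σ and B(m) is the m-th Bell number. -/
/-!
Let `S_n` act on functions `Fin m → Fin n` by postcomposition. A permutation `σ` fixes `f`
exactly when `f` takes values in the fixed points of `σ`, so it fixes `fxd(σ)^m` functions, and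
Burnside's lemma turns `∑_σ fxd(σ)^m` into `n!` times the number of orbits. Two functions lie in
the same orbit iff they have the same partition into fibres, and for `m ≤ n` every partition of
`Fin m` is such a fibre partition; hence the orbits are counted by the Bell number `B(m)`.
-/

open Finset MulAction

namespace Finpartition

variable {α β : Type*} [DecidableEq α]

theorem parts_eq_image_part {s : Finset α} (P : Finpartition s) :
    P.parts = s.image P.part := by
  ext t
  refine ⟨fun ht => ?_, fun ht => ?_⟩
  · obtain ⟨a, ha, rfl⟩ := P.part_surjOn ht
    exact mem_image_of_mem _ ha
  · obtain ⟨a, ha, rfl⟩ := mem_image.1 ht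
    exact P.part_mem.2 ha

theorem ext_part {s : Finset α} {P Q : Finpartition s} (h : ∀ a ∈ s, P.part a = Q.part a) :
    P = Q :=
  Finpartition.ext <| by rw [parts_eq_image_part, parts_eq_image_part, image_congr h]

variable [Fintype α] [DecidableEq β]

instance decidableRelKer (f : α → β) : DecidableRel (Setoid.ker f).r :=
  fun a b => decEq (f a) (f b)

def ker (f : α → β) : Finpartition (univ : Finset α) :=
  ofSetoid (Setoid.ker f)

theorem mem_part_ker {f : α → β} {a b : α} : b ∈ (ker f).part a ↔ f a = f b :=
  mem_part_ofSetoid_iff_rel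

theorem ker_eq_ker_iff {f g : α → β} : ker f = ker g ↔ ∀ a b, f a = f b ↔ g a = g b := by
  refine ⟨fun h a b => by rw [← mem_part_ker, h, mem_part_ker], fun h => ?_⟩
  refine ext_part fun a _ => ?_
  ext b
  rw [mem_part_ker, mem_part_ker, h]

theorem ker_perm_smul (σ : Equiv.Perm β) (f : α → β) : ker (σ • f) = ker f :=
  ker_eq_ker_iff.2 fun _ _ => σ.injective.eq_iff

theorem exists_perm_smul_eq_of_ker_eq [Finite β] {f g : α → β} (hfg : ker f = ker g) :
    ∃ σ : Equiv.Perm β, σ • f = g := by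
  have hker := ker_eq_ker_iff.1 hfg
  let g' : Quotient (Setoid.ker f) → β := Quotient.lift g fun a b hab => (hker a b).1 hab
  have hg' : g'.Injective := by
    rintro ⟨a⟩ ⟨b⟩ hab
    exact Quotient.sound ((hker a b).2 hab)
  obtain ⟨σ, hσ⟩ :=
    Equiv.Perm.exists_extending_pair _ _ (Setoid.kerLift_injective f) hg'
  exact ⟨σ, funext fun a => hσ ⟦a⟧⟩

theorem exists_ker_eq [Fintype β] (P : Finpartition (univ : Finset α))
    (hP : Fintype.card α ≤ Fintype.card β) : ∃ f : α → β, ker f = P := by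
  obtain ⟨e⟩ : Nonempty (P.parts ↪ β) := Function.Embedding.nonempty_of_card_le <| by
    simpa using P.card_parts_le_card.trans hP
  refine ⟨fun a => e ⟨P.part a, P.part_mem.2 (mem_univ a)⟩, ext_part fun a _ => ?_⟩
  ext b
  rw [mem_part_ker, e.injective.eq_iff, Subtype.mk.injEq,
    P.mem_part_iff_part_eq_part (mem_univ b) (mem_univ a), eq_comm]

end Finpartition

open Finpartition in
theorem card_orbitRel_perm_fun_eq_card_finpartition {α β : Type*} [Fintype α] [DecidableEq α]
    [Fintype β] [DecidableEq β] (h : Fintype.card α ≤ Fintype.card β) :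
    Nat.card (orbitRel.Quotient (Equiv.Perm β) (α → β)) =
      Nat.card (Finpartition (univ : Finset α)) := by
  refine Nat.card_congr (Equiv.ofBijective (Quotient.lift ker ?_) ⟨?_, ?_⟩)
  · rintro f _ ⟨σ, rfl⟩
    exact ker_perm_smul σ _
  · rintro ⟨f⟩ ⟨g⟩ hfg
    obtain ⟨σ, hσ⟩ := exists_perm_smul_eq_of_ker_eq hfg
    exact Quotient.sound ⟨σ⁻¹, by subst hσ; exact inv_smul_smul σ f⟩
  · intro P
    obtain ⟨f, hf⟩ := exists_ker_eq P h
    exact ⟨⟦f⟧, hf⟩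

theorem card_fixedBy_fun {G α β : Type*} [Group G] [MulAction G β] [Finite α] (g : G) :
    Nat.card (fixedBy (α → β) g) = Nat.card (fixedBy β g) ^ Nat.card α := by
  rw [← Nat.card_fun]
  refine Nat.card_congr ((Equiv.subtypeEquivRight fun f => ?_).trans Equiv.subtypePiEquivPi)
  exact mem_fixedBy.trans funext_iff

theorem stmt_12_general (m : ℕ) (n : ℕ) (hmn : m ≤ n) :
    (1 / n.factorial : ℚ) *
        ∑ σ : Equiv.Perm (Fin n),
          ((Finset.univ.filter fun i => σ i = i).card : ℚ) ^ m
      = Nat.card (Finpartition (Finset.univ : Finset (Fin m))) := by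
  classical
  have hfix (σ : Equiv.Perm (Fin n)) :
      (univ.filter fun i => σ i = i).card ^ m = Nat.card (fixedBy (Fin m → Fin n) σ) := by
    rw [card_fixedBy_fun, Nat.card_fin, Nat.card_eq_card_toFinset]
    congr 3
    ext i
    simp [Equiv.Perm.smul_def]
  have burnside :=
    sum_card_fixedBy_eq_card_orbits_mul_card_group (Equiv.Perm (Fin n)) (Fin m → Fin n)
  simp only [← Nat.card_eq_fintype_card, ← hfix, Nat.card_perm, Nat.card_fin] at burnside
  rw [card_orbitRel_perm_fun_eq_card_finpartition (by simpa using hmn)] at burnside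
  rw [div_mul_eq_mul_div, one_mul, div_eq_iff (by positivity)]
  exact_mod_cast burnside

/-- For a positive integer `m` and any `n ≥ m`, the `m`-th moment of the
number-of-fixed-points statistic on `S_n` is the `m`-th Bell number:
`(1/n!) ∑_{σ ∈ S_n} fxd(σ)^m = B(m)`, where `B(m)` is the number of set partitions of an
`m`-element set. -/
theorem stmt_12 (m : ℕ) (hm : 0 < m) (n : ℕ) (hmn : m ≤ n) :
    (1 / n.factorial : ℚ) *
        ∑ σ : Equiv.Perm (Fin n),
          ((Finset.univ.filter fun i => σ i = i).card : ℚ) ^ m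
      = Nat.card (Finpartition (Finset.univ : Finset (Fin m))) :=
  stmt_12_general m n hmn
end
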